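/- Let X be a nonempty finite set, m a natural number, μ ∈ (0, 1], and f̃ : X → [0, 1/μ] a function with E_{x∼U(X)}[f̃(x)] = 1, where U(X) is the uniform distribution on X; let D_{f̃} be the probability distribution on X assigning mass f̃(x)/|X| to each x. Let T̄, T̃ : X^m → [0,1], and for each t ∈ [0,1]^m define the distinguisher D_t : X^m → {0,1} by D_t(x) = 1[for all i ∈ [m], μ·f̃(x_i) ≥ t_i]. If γ > 0 is such that |E_{x∼U(X)^m}[D_t(x)·(T̄(x) − T̃(x))]| ≤ γ for every t ∈ [0,1]^m, then |E_{x∼D_{f̃}^m}[T̄(x)] − E_{x∼D_{f̃}^m}[T̃(x)]| ≤ μ^{−m}·γ. -/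

import Mathlib

/-!
Writing `c_i = μ f̃(x_i) ∈ [0,1]`, the `D_{f̃}^m`-weight of `x` is `μ^{-m}|X|^{-m} ∏ c_i`, and
`∏ c_i` is the volume of the box `{t ∈ [0,1]^m | t ≤ c}`, i.e. the probability that `D_t(x) = 1`
for uniformly random `t`. Hence the difference of expectations is `μ^{-m}` times the average over
`t` of the advantage of `D_t`, which is at most `γ` in absolute value.
-/

attribute [local instance] Classical.propDecidable

open MeasureTheory Set unitInterval

lemma unitInterval.volume_real_pi_Iic {ι : Type*} [Fintype ι] (c : ι → I) :
    volume.real (Iic c) = ∏ i, (c i : ℝ) := by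
  rw [← pi_univ_Iic, measureReal_def, volume_pi_pi, ENNReal.toReal_prod]
  exact Finset.prod_congr rfl fun i _ => by simp [ENNReal.toReal_ofReal (c i).2.1]

lemma abs_sum_prod_mul_le_of_abs_sum_threshold_le {α ι : Type*} [Fintype α] [Fintype ι]
    (w : α → ℝ) (c : α → ι → ℝ) (hc : ∀ a i, c a i ∈ Icc (0 : ℝ) 1) {γ : ℝ}
    (hγ : ∀ t : ι → ℝ, (∀ i, t i ∈ Icc (0 : ℝ) 1) →
      |∑ a, (if ∀ i, t i ≤ c a i then (1 : ℝ) else 0) * w a| ≤ γ) :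
    |∑ a, (∏ i, c a i) * w a| ≤ γ := by
  let c' : α → ι → I := fun a i => ⟨c a i, hc a i⟩
  have hthreshold : ∀ (t : ι → I) a, (if ∀ i, (t i : ℝ) ≤ c a i then (1 : ℝ) else 0) * w a =
      (Iic (c' a)).indicator (fun _ => w a) t := by
    intro t a
    rw [boole_mul, indicator_apply]
    exact if_congr Iff.rfl rfl rfl
  have hintegral : ∑ a, (∏ i, c a i) * w a =
      ∫ t : ι → I, ∑ a, (if ∀ i, (t i : ℝ) ≤ c a i then (1 : ℝ) else 0) * w a := by
    simp only [hthreshold]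
    rw [integral_finsetSum _ fun a _ => (integrable_const (w a)).indicator measurableSet_Iic]
    refine Finset.sum_congr rfl fun a _ => ?_
    rw [integral_indicator_const _ measurableSet_Iic, volume_real_pi_Iic, smul_eq_mul]
  have hbound : ∀ t : ι → I,
      ‖∑ a, (if ∀ i, (t i : ℝ) ≤ c a i then (1 : ℝ) else 0) * w a‖ ≤ γ := fun t =>
    (Real.norm_eq_abs _).trans_le (hγ (fun i => t i) fun i => (t i).2)
  rw [hintegral, ← Real.norm_eq_abs]
  simpa using norm_integral_le_of_norm_le_const (μ := volume) (.of_forall hbound)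

theorem stmt_14 {X : Type*} [Fintype X] (m : ℕ)
    (μ : ℝ) (hμ : μ ∈ Set.Ioc (0 : ℝ) 1)
    (ftil : X → ℝ) (hftil : ∀ x, ftil x ∈ Set.Icc (0 : ℝ) (1 / μ))
    (Tbar Ttil : (Fin m → X) → ℝ)
    (γ : ℝ)
    (hreg : ∀ t : Fin m → ℝ, (∀ i, t i ∈ Set.Icc (0 : ℝ) 1) →
      |∑ x : Fin m → X, ((1 : ℝ) / (Fintype.card X : ℝ) ^ m) *
        ((if ∀ i, t i ≤ μ * ftil (x i) then (1 : ℝ) else 0) * (Tbar x - Ttil x))| ≤ γ) :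
    |(∑ x : Fin m → X, (∏ i, ftil (x i) / (Fintype.card X : ℝ)) * Tbar x) -
      (∑ x : Fin m → X, (∏ i, ftil (x i) / (Fintype.card X : ℝ)) * Ttil x)| ≤
      μ ^ (-(m : ℤ)) * γ := by
  have hμ0 : 0 < μ := hμ.1
  set N : ℝ := (Fintype.card X : ℝ)
  have hscaled : ∀ x, μ * ftil x ∈ Icc (0 : ℝ) 1 := fun x =>
    ⟨mul_nonneg hμ0.le (hftil x).1, by
      simpa [hμ0.ne'] using mul_le_mul_of_nonneg_left (hftil x).2 hμ0.le⟩
  have hdensity : ∀ x : Fin m → X,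
      ∏ i, ftil (x i) / N = μ ^ (-(m : ℤ)) * ((∏ i, μ * ftil (x i)) / N ^ m) := by
    intro x
    rw [Finset.prod_div_distrib, Finset.prod_mul_distrib, Finset.prod_const, Finset.prod_const,
      Finset.card_univ, Fintype.card_fin, zpow_neg, zpow_natCast]
    field_simp
  have hrescale : (∑ x : Fin m → X, (∏ i, ftil (x i) / N) * Tbar x) -
      (∑ x : Fin m → X, (∏ i, ftil (x i) / N) * Ttil x) =
      μ ^ (-(m : ℤ)) * ∑ x : Fin m → X, (∏ i, μ * ftil (x i)) * ((Tbar x - Ttil x) / N ^ m) := by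
    rw [← Finset.sum_sub_distrib, Finset.mul_sum]
    exact Finset.sum_congr rfl fun x _ => by rw [hdensity]; ring
  rw [hrescale, abs_mul, abs_of_pos (zpow_pos hμ0 _)]
  gcongr
  refine abs_sum_prod_mul_le_of_abs_sum_threshold_le (fun x => (Tbar x - Ttil x) / N ^ m)
    (fun x i => μ * ftil (x i)) (fun x i => hscaled (x i)) fun t ht => ?_
  convert hreg t ht using 3 with x
  -- the two indicators may carry different `Decidable` instances, which `ring` does not identify
  split_ifs <;> ring
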